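/- arXiv:2309.01898 — 2 statements merged into one kernel-verified Lean document; each statement's English description precedes it below -/
import Mathlib

section
/- On the region where v ≠ 0 and ‖p‖ > r > 0, the gradient of the collision cone CBF h(p,v) = ⟨p,v⟩ + ‖v‖√(‖p‖²−r²) with respect to v is nonzero; hence the row vector L_g h = (−∂h/∂v₁, −∂h/∂v₂) is nonzero. -/
open scoped RealInnerProductSpace

section Gradient

variable {E : Type*} [NormedAddCommGroup E] [InnerProductSpace ℝ E] [CompleteSpace E]
  {f g : E → ℝ} {f' g' x : E}

theorem HasGradientAt.add (hf : HasGradientAt f f' x) (hg : HasGradientAt g g' x) :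
    HasGradientAt (fun y => f y + g y) (f' + g') x := by
  rw [hasGradientAt_iff_hasFDerivAt, map_add]
  exact hf.hasFDerivAt.add hg.hasFDerivAt

theorem HasGradientAt.mul_const (hf : HasGradientAt f f' x) (c : ℝ) :
    HasGradientAt (fun y => f y * c) (c • f') x := by
  rw [hasGradientAt_iff_hasFDerivAt, map_smul]
  exact hf.hasFDerivAt.mul_const c

theorem hasGradientAt_inner_right (p x : E) : HasGradientAt (fun y => ⟪p, y⟫) p x :=
  (innerSL ℝ p).hasFDerivAt

theorem hasGradientAt_norm {v : E} (hv : v ≠ 0) : HasGradientAt (‖·‖) (‖v‖⁻¹ • v) v := by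
  have hsq : HasFDerivAt (fun y : E => ‖y‖ ^ 2) (2 • innerSL ℝ v) v :=
    (hasStrictFDerivAt_norm_sq v).hasFDerivAt
  have hnorm := hsq.sqrt (pow_ne_zero 2 (norm_ne_zero_iff.mpr hv))
  simp only [Real.sqrt_sq (norm_nonneg _)] at hnorm
  rw [hasGradientAt_iff_hasFDerivAt]
  refine hnorm.congr_fderiv ?_
  ext y
  simp only [smul_apply, coe_innerSL_apply, map_smul,
    InnerProductSpace.toDual_apply_apply, smul_eq_mul, nsmul_eq_mul, Nat.cast_ofNat]
  field_simp

end Gradient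

theorem add_ne_zero_of_norm_lt {E : Type*} [SeminormedAddCommGroup E] {x y : E}
    (h : ‖y‖ < ‖x‖) : x + y ≠ 0 :=
  fun hxy => h.ne' (by rw [eq_neg_of_add_eq_zero_right hxy, norm_neg])

theorem Real.sqrt_sq_sub_sq_lt {a b : ℝ} (ha : 0 < a) (hb : b ≠ 0) : √(a ^ 2 - b ^ 2) < a :=
  (Real.sqrt_lt' ha).mpr (by linarith [pow_pos (abs_pos.mpr hb) 2, sq_abs b])

theorem stmt_4 (p v : EuclideanSpace ℝ (Fin 2)) (hv : v ≠ 0)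
    (r : ℝ) (hr : 0 < r) (hpr : r < ‖p‖) :
    HasGradientAt (fun w : EuclideanSpace ℝ (Fin 2) => ⟪p, w⟫ + ‖w‖ * Real.sqrt (‖p‖ ^ 2 - r ^ 2))
      (p + (Real.sqrt (‖p‖ ^ 2 - r ^ 2) / ‖v‖) • v) v ∧
    p + (Real.sqrt (‖p‖ ^ 2 - r ^ 2) / ‖v‖) • v ≠ 0 := by
  set c := Real.sqrt (‖p‖ ^ 2 - r ^ 2)
  have hgrad : p + (c / ‖v‖) • v = p + c • (‖v‖⁻¹ • v) := by rw [smul_smul, div_eq_mul_inv]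
  have hnorm : ‖(c / ‖v‖) • v‖ = c := by
    rw [norm_smul, Real.norm_of_nonneg (by positivity), div_mul_cancel₀ _ (norm_ne_zero_iff.mpr hv)]
  refine ⟨hgrad ▸ (hasGradientAt_inner_right p v).add ((hasGradientAt_norm hv).mul_const c), ?_⟩
  refine add_ne_zero_of_norm_lt ?_
  rw [hnorm]
  exact Real.sqrt_sq_sub_sq_lt (hr.trans hpr) hr.ne'
end

section
/- For p, v ∈ ℝ² with v ≠ 0 and ‖p‖ > r > 0: if h(p,v) = ⟨p,v⟩ + ‖v‖√(‖p‖²−r²) > 0 and ⟨p,v⟩ < 0, then the perpendicular distance from the origin to the line {p + t v : t ∈ ℝ} exceeds r; i.e., the relative trajectory ray misses the disc of radius r centered at the origin. -/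
/-!
Since `⟪p, v⟫ < 0`, the hypothesis says `-⟪p, v⟫ < ‖v‖ √(‖p‖² - r²)` between nonnegative
quantities; squaring gives `r² ‖v‖² < ‖p‖² ‖v‖² - ⟪p, v⟫²`, and by Lagrange's identity the
right-hand side is the squared cross product `(p₀ v₁ - p₁ v₀)²`.
-/

open scoped RealInnerProductSpace

lemma EuclideanSpace.inner_sq_add_cross_sq (p v : EuclideanSpace ℝ (Fin 2)) :
    ⟪p, v⟫ ^ 2 + (p 0 * v 1 - p 1 * v 0) ^ 2 = ‖p‖ ^ 2 * ‖v‖ ^ 2 := by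
  simp only [EuclideanSpace.real_norm_sq_eq, PiLp.inner_apply, Fin.sum_univ_two,
    RCLike.inner_apply, conj_trivial]
  ring

lemma sq_lt_mul_of_neg_of_pos_add_mul_sqrt {a b x : ℝ} (ha : a < 0) (h : 0 < a + b * √x) :
    a ^ 2 < b ^ 2 * x := by
  have hx : 0 ≤ x := by
    by_contra hx
    rw [Real.sqrt_eq_zero'.mpr (by linarith), mul_zero] at h
    linarith
  calc a ^ 2 = (-a) ^ 2 := by ring
    _ < (b * √x) ^ 2 := pow_lt_pow_left₀ (by linarith) (by linarith) two_ne_zero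
    _ = b ^ 2 * x := by rw [mul_pow, Real.sq_sqrt hx]

theorem stmt_15_general (p v : EuclideanSpace ℝ (Fin 2))
    (r : ℝ)
    (hh : 0 < ⟪p, v⟫ + ‖v‖ * Real.sqrt (‖p‖ ^ 2 - r ^ 2))
    (hpv : ⟪p, v⟫ < 0) :
    r < |p 0 * v 1 - p 1 * v 0| / ‖v‖ := by
  have hv : 0 < ‖v‖ := norm_pos_iff.mpr (by rintro rfl; simp at hpv)
  have hcross : (r * ‖v‖) ^ 2 < (p 0 * v 1 - p 1 * v 0) ^ 2 := by
    linear_combination sq_lt_mul_of_neg_of_pos_add_mul_sqrt hpv hh -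
      EuclideanSpace.inner_sq_add_cross_sq p v
  rw [lt_div_iff₀ hv]
  calc r * ‖v‖ ≤ |r * ‖v‖| := le_abs_self _
    _ < |p 0 * v 1 - p 1 * v 0| := sq_lt_sq.mp hcross

theorem stmt_15 (p v : EuclideanSpace ℝ (Fin 2)) (hv : v ≠ 0)
    (r : ℝ) (hr : 0 < r) (hpr : r < ‖p‖)
    (hh : 0 < ⟪p, v⟫ + ‖v‖ * Real.sqrt (‖p‖ ^ 2 - r ^ 2))
    (hpv : ⟪p, v⟫ < 0) :
    r < |p 0 * v 1 - p 1 * v 0| / ‖v‖ :=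
  stmt_15_general p v r hh hpv
end
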